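/- arXiv:2106.13003 — 3 statements merged into one kernel-verified Lean document; each statement's English description precedes it below -/
import Mathlib

section
/- Let $\mathbb{C}_v$ be a complete algebraically closed non-archimedean field, let $D = \{z : |z - a|_v \leq r\}$ be a closed disk, and let $\phi \in \mathbb{C}_v[z]$ be a polynomial of degree $d \geq 1$. Then $\phi^{-1}(D)$ is a disjoint union of closed disks $D_1, \ldots, D_m$ with $1 \leq m \leq d$, and for each $i$ there is an integer $1 \leq d_i \leq d$ such that every point of $D$ has exactly $d_i$ preimages in $D_i$ counted with multiplicity, with $d_1 + \cdots + d_m = d$. -/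
/-!
Write `φ - a = c ∏ (X - γ)` over the roots `γ` of `φ - a`. For such a root `α`, the Gauss norm of
`(φ - a)(X + α)` at radius `t` is `|c| ∏ max(t, |γ - α|)`; it increases strictly from `0` to `∞`,
so it equals `r` at a unique `ρ(α)`. The ultrametric inequality shows that `φ⁻¹(D)` is the union of
the disks `B(α, ρ(α))`, any two of which are equal or disjoint.

The number of roots of `φ - w` in `B(α, ρ(α))` is the largest index at which the Gauss norm of
`(φ - w)(X + α)` on that disk is attained (its Weierstrass degree). Passing from `a` to `w ∈ D`
changes only the constant coefficient, and by at most `r`, the Gauss norm; as that index is at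
least `1` (`α` is a root of `φ - a`), it does not change.
-/

open Polynomial Metric

namespace Polynomial

variable {K : Type*} [NormedField K]

/-- `n` is the largest index at which `j ↦ ‖p.coeff j‖ * ρ ^ j` attains its maximum `G`: `G` is the
Gauss norm of `p` at radius `ρ` and `n` its Weierstrass degree on `closedBall 0 ρ`. -/
structure IsDominantIndex (p : K[X]) (ρ G : ℝ) (n : ℕ) : Prop where
  coeff_le : ∀ j, ‖p.coeff j‖ * ρ ^ j ≤ G
  coeff_eq : ‖p.coeff n‖ * ρ ^ n = G
  coeff_lt : ∀ j, n < j → ‖p.coeff j‖ * ρ ^ j < G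

namespace IsDominantIndex

variable {p q : K[X]} {ρ G H : ℝ} {n m : ℕ}

theorem unique {G' : ℝ} {n' : ℕ} (h : IsDominantIndex p ρ G n) (h' : IsDominantIndex p ρ G' n') :
    n = n' := by
  have hG : G = G' := le_antisymm (h.coeff_eq ▸ h'.coeff_le n) (h'.coeff_eq ▸ h.coeff_le n')
  by_contra hne
  rcases Nat.lt_or_gt_of_ne hne with hlt | hlt
  · exact (h.coeff_lt n' hlt).ne (h'.coeff_eq.trans hG.symm)
  · exact (h'.coeff_lt n hlt).ne (h.coeff_eq.trans hG)

theorem ne_zero (h : IsDominantIndex p ρ G n) (hG : 0 < G) : p ≠ 0 := by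
  rintro rfl
  simp [← h.coeff_eq] at hG

theorem C_mul (h : IsDominantIndex p ρ G n) {c : K} (hc : c ≠ 0) :
    IsDominantIndex (C c * p) ρ (‖c‖ * G) n := by
  have hc' : 0 < ‖c‖ := norm_pos_iff.2 hc
  refine ⟨fun j => ?_, ?_, fun j hj => ?_⟩ <;> rw [coeff_C_mul, norm_mul, mul_assoc]
  · exact mul_le_mul_of_nonneg_left (h.coeff_le j) hc'.le
  · rw [h.coeff_eq]
  · exact mul_lt_mul_of_pos_left (h.coeff_lt j hj) hc'

variable [IsUltrametricDist K]

theorem add_C (h : IsDominantIndex p ρ G n) (hn : n ≠ 0) {u : K} (hu : ‖u‖ ≤ G) :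
    IsDominantIndex (p + C u) ρ G n := by
  have coeff_eq_of_ne : ∀ j ≠ 0, (p + C u).coeff j = p.coeff j := fun j hj => by
    simp [coeff_C, hj]
  refine ⟨fun j => ?_, by rw [coeff_eq_of_ne n hn, h.coeff_eq], fun j hj => ?_⟩
  · rcases eq_or_ne j 0 with rfl | hj
    · simpa using (IsUltrametricDist.norm_add_le_max _ _).trans
        (max_le (by simpa using h.coeff_le 0) hu)
    · rw [coeff_eq_of_ne j hj]
      exact h.coeff_le j
  · rw [coeff_eq_of_ne j (by omega)]
    exact h.coeff_lt j hj

open Finset in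
theorem mul (hp : IsDominantIndex p ρ G n) (hq : IsDominantIndex q ρ H m) (hρ : 0 < ρ)
    (hG : 0 < G) (hH : 0 < H) : IsDominantIndex (p * q) ρ (G * H) (n + m) := by
  set t : ℕ × ℕ → K := fun x => p.coeff x.1 * q.coeff x.2
  have norm_t : ∀ k : ℕ, ∀ x ∈ antidiagonal k,
      ‖t x‖ * ρ ^ k = (‖p.coeff x.1‖ * ρ ^ x.1) * (‖q.coeff x.2‖ * ρ ^ x.2) := by
    intro k x hx
    rw [← mem_antidiagonal.1 hx, norm_mul, pow_add]
    ring
  have t_le : ∀ k : ℕ, ∀ x ∈ antidiagonal k, ‖t x‖ * ρ ^ k ≤ G * H := fun k x hx => by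
    rw [norm_t k x hx]
    exact mul_le_mul (hp.coeff_le _) (hq.coeff_le _) (by positivity) hG.le
  have t_lt : ∀ k : ℕ, ∀ x ∈ antidiagonal k, n < x.1 ∨ m < x.2 → ‖t x‖ * ρ ^ k < G * H := by
    intro k x hx hnm
    rw [norm_t k x hx]
    rcases hnm with h | h
    · exact mul_lt_mul_of_lt_of_le_of_nonneg_of_pos (hp.coeff_lt _ h) (hq.coeff_le _)
        (by positivity) hH
    · exact mul_lt_mul_of_le_of_lt_of_nonneg_of_pos (hp.coeff_le _) (hq.coeff_lt _ h)
        (by positivity) hG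
  have exists_term_ge : ∀ k : ℕ, ∃ x ∈ antidiagonal k,
      ‖(p * q).coeff k‖ * ρ ^ k ≤ ‖t x‖ * ρ ^ k := fun k => by
    obtain ⟨x, hx, hle⟩ := IsUltrametricDist.exists_norm_finsetSum_le_of_nonempty
      ⟨(0, k), mem_antidiagonal.2 (zero_add k)⟩ t
    exact ⟨x, hx, by rw [coeff_mul]; gcongr⟩
  refine ⟨fun k => ?_, ?_, fun k hk => ?_⟩
  · obtain ⟨x, hx, hle⟩ := exists_term_ge k
    exact hle.trans (t_le k x hx)
  · have hnm : (n, m) ∈ antidiagonal (n + m) := mem_antidiagonal.2 rfl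
    have hmax : ∀ x ∈ antidiagonal (n + m), x ≠ (n, m) → ‖t x‖ < ‖t (n, m)‖ := by
      intro x hx hne
      refine lt_of_mul_lt_mul_right ?_ (pow_nonneg hρ.le (n + m))
      rw [norm_t _ _ hnm, hp.coeff_eq, hq.coeff_eq]
      refine t_lt _ x hx ?_
      have := mem_antidiagonal.1 hx
      by_contra! h
      exact hne (Prod.ext (by omega) (by omega))
    rw [coeff_mul, IsNonarchimedean.apply_sum_eq_of_lt IsUltrametricDist.isNonarchimedean_norm
      (fun x => (norm_neg x).symm) hnm hmax, norm_t _ _ hnm, hp.coeff_eq, hq.coeff_eq]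
  · obtain ⟨x, hx, hle⟩ := exists_term_ge k
    refine hle.trans_lt (t_lt k x hx ?_)
    have := mem_antidiagonal.1 hx
    omega

end IsDominantIndex

variable {ρ : ℝ}

theorem isDominantIndex_one : IsDominantIndex (1 : K[X]) ρ 1 0 := by
  refine ⟨fun j => ?_, by simp, fun j hj => ?_⟩ <;> rcases j with _ | j
  · simp
  · simp [coeff_one]
  · omega
  · simp [coeff_one]

theorem isDominantIndex_X_sub_C (β : K) (hρ : 0 < ρ) :
    IsDominantIndex (X - C β) ρ (max ρ ‖β‖) (if ‖β‖ ≤ ρ then 1 else 0) := by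
  split_ifs with hβ
  · rw [max_eq_left hβ]
    refine ⟨fun j => ?_, by simp, fun j hj => ?_⟩
    · match j with
      | 0 => simpa using hβ
      | 1 => simp
      | j + 2 => simp [coeff_X, hρ.le]
    · obtain ⟨j, rfl⟩ := Nat.exists_eq_add_of_lt hj
      simp [coeff_X, hρ]
  · push Not at hβ
    rw [max_eq_right hβ.le]
    refine ⟨fun j => ?_, by simp, fun j hj => ?_⟩
    · match j with
      | 0 => simp
      | 1 => simpa using hβ.le
      | j + 2 => simp [coeff_X]
    · match j, hj with
      | 1, _ => simpa using hβ
      | j + 2, _ => simp [coeff_X, hρ.trans hβ]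

end Polynomial

section GaussProd

variable {E : Type*} [SeminormedAddCommGroup E]

/-- `∏_{γ ∈ R} max t ‖γ - α‖`: the Gauss norm at radius `t` of `∏_{γ ∈ R} (X - (γ - α))`, and a
bound for `z ↦ ∏_{γ ∈ R} ‖z - γ‖` on `closedBall α t`. -/
def gaussProd (R : Multiset E) (α : E) (t : ℝ) : ℝ :=
  (R.map fun γ => max t ‖γ - α‖).prod

variable (R : Multiset E) {α β z : E} {s t : ℝ}

theorem gaussProd_pos (ht : 0 < t) : 0 < gaussProd R α t :=
  Multiset.prod_pos fun _ hx => by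
    obtain ⟨γ, -, rfl⟩ := Multiset.mem_map.1 hx
    exact ht.trans_le (le_max_left _ _)

theorem one_le_gaussProd (ht : 1 ≤ t) : 1 ≤ gaussProd R α t :=
  Multiset.one_le_prod_map fun _ _ => ht.trans (le_max_left _ _)

theorem gaussProd_mono (hs : 0 ≤ s) (hst : s ≤ t) : gaussProd R α s ≤ gaussProd R α t :=
  Multiset.prod_map_le_prod_map₀ _ _ (fun _ _ => hs.trans (le_max_left _ _))
    fun _ _ => max_le_max hst le_rfl

theorem continuous_gaussProd : Continuous (gaussProd R α) :=
  continuous_multiset_prod _ fun _ _ => continuous_id.max continuous_const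

theorem gaussProd_cons_self (ht : 0 ≤ t) : gaussProd (α ::ₘ R) α t = t * gaussProd R α t := by
  simp [gaussProd, ht]

variable {R}

theorem strictMonoOn_gaussProd (hα : α ∈ R) : StrictMonoOn (gaussProd R α) (Set.Ici 0) := by
  obtain ⟨R, rfl⟩ := Multiset.exists_cons_of_mem hα
  intro s hs t ht hst
  rw [gaussProd_cons_self _ hs, gaussProd_cons_self _ ht]
  calc s * gaussProd R α s ≤ s * gaussProd R α t :=
        mul_le_mul_of_nonneg_left (gaussProd_mono _ hs hst.le) hs
    _ < t * gaussProd R α t := mul_lt_mul_of_pos_right hst (gaussProd_pos _ (hs.trans_lt hst))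

theorem exists_gaussProd_eq (hα : α ∈ R) (hs : 0 < s) : ∃ ρ, 0 < ρ ∧ gaussProd R α ρ = s := by
  obtain ⟨R, rfl⟩ := Multiset.exists_cons_of_mem hα
  have h0 : gaussProd (α ::ₘ R) α 0 = 0 := by rw [gaussProd_cons_self _ le_rfl, zero_mul]
  set T := max 1 s
  have hT : s ≤ gaussProd (α ::ₘ R) α T := by
    rw [gaussProd_cons_self _ (by positivity)]
    exact (le_max_right 1 s).trans
      (le_mul_of_one_le_right (by positivity) (one_le_gaussProd _ (le_max_left 1 s)))
  obtain ⟨ρ, hρT, hρ⟩ := intermediate_value_Icc (by positivity : (0 : ℝ) ≤ T)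
    (continuous_gaussProd _).continuousOn ⟨h0.trans_le hs.le, hT⟩
  refine ⟨ρ, hρT.1.lt_of_ne ?_, hρ⟩
  rintro rfl
  exact hs.ne' (hρ.symm.trans h0)

variable [IsUltrametricDist E]

theorem gaussProd_eq_of_norm_sub_le (h : ‖α - β‖ ≤ t) : gaussProd R α t = gaussProd R β t := by
  have key : ∀ x y : E, ‖x - y‖ ≤ t → ∀ γ : E, max t ‖γ - x‖ ≤ max t ‖γ - y‖ := by
    intro x y hxy γ
    refine max_le (le_max_left _ _) ?_
    simp only [← dist_eq_norm] at hxy ⊢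
    exact (dist_triangle_max γ y x).trans
      (max_le (le_max_right _ _) ((dist_comm y x ▸ hxy).trans (le_max_left _ _)))
  unfold gaussProd
  congr 1
  refine Multiset.map_congr rfl fun γ _ => le_antisymm (key α β h γ) (key β α ?_ γ)
  rwa [norm_sub_rev]

theorem prod_norm_sub_le_gaussProd (hz : ‖z - α‖ ≤ t) :
    (R.map fun γ => ‖z - γ‖).prod ≤ gaussProd R α t :=
  Multiset.prod_map_le_prod_map₀ _ _ (fun _ _ => norm_nonneg _) fun γ _ => by
    simp only [← dist_eq_norm] at hz ⊢
    exact (dist_triangle_max z α γ).trans (max_le_max hz (dist_comm α γ).le)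

theorem prod_norm_sub_eq_gaussProd (hα : ∀ γ ∈ R, ‖z - α‖ ≤ ‖z - γ‖) :
    (R.map fun γ => ‖z - γ‖).prod = gaussProd R α ‖z - α‖ := by
  unfold gaussProd
  congr 1
  refine Multiset.map_congr rfl fun γ hγ => le_antisymm ?_ (max_le (hα γ hγ) ?_)
  · simp only [← dist_eq_norm]
    exact (dist_triangle_max z α γ).trans (max_le_max le_rfl (dist_comm α γ).le)
  · simp only [← dist_eq_norm] at hα ⊢
    exact (dist_triangle_max γ z α).trans (max_le (dist_comm γ z).le (hα γ hγ))

theorem prod_norm_sub_le_iff_exists_mem_closedBall {ρ : E → ℝ}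
    (hρ : ∀ α ∈ R, 0 < ρ α ∧ gaussProd R α (ρ α) = s) (hR : R ≠ 0) (z : E) :
    (R.map fun γ => ‖z - γ‖).prod ≤ s ↔ ∃ α ∈ R, z ∈ closedBall α (ρ α) := by
  classical
  simp only [mem_closedBall, dist_eq_norm]
  constructor
  · intro hz
    obtain ⟨α, hα, hmin⟩ := R.toFinset.exists_min_image (fun γ => ‖z - γ‖)
      (Multiset.toFinset_nonempty.2 hR)
    rw [Multiset.mem_toFinset] at hα
    rw [prod_norm_sub_eq_gaussProd fun γ hγ => hmin γ (Multiset.mem_toFinset.2 hγ),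
      ← (hρ α hα).2] at hz
    exact ⟨α, hα, ((strictMonoOn_gaussProd hα).le_iff_le (norm_nonneg _) (hρ α hα).1.le).1 hz⟩
  · rintro ⟨α, hα, hz⟩
    exact (prod_norm_sub_le_gaussProd hz).trans (hρ α hα).2.le

theorem closedBall_eq_or_disjoint {ρ : E → ℝ}
    (hρ : ∀ α ∈ R, 0 < ρ α ∧ gaussProd R α (ρ α) = s) (hα : α ∈ R) (hβ : β ∈ R) :
    closedBall α (ρ α) = closedBall β (ρ β) ∨
      Disjoint (closedBall α (ρ α)) (closedBall β (ρ β)) := by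
  wlog hle : ρ α ≤ ρ β generalizing α β
  · exact (this hβ hα (le_of_not_ge hle)).imp Eq.symm fun h => h.symm
  refine or_iff_not_imp_right.2 fun hnd => ?_
  obtain ⟨z, hzα, hzβ⟩ := Set.not_disjoint_iff.1 hnd
  have hαβ : α ∈ closedBall β (ρ β) := by
    rw [mem_closedBall] at *
    exact (dist_triangle_max α z β).trans
      (max_le ((dist_comm α z).trans_le hzα |>.trans hle) hzβ)
  have hρeq : ρ α = ρ β := by
    refine (strictMonoOn_gaussProd hα).injOn (hρ α hα).1.le (hρ β hβ).1.le ?_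
    rw [(hρ α hα).2, gaussProd_eq_of_norm_sub_le (mem_closedBall_iff_norm.1 hαβ), (hρ β hβ).2]
  rw [hρeq, IsUltrametricDist.closedBall_eq_of_mem hαβ]

end GaussProd

theorem Multiset.exists_fin_transversal {α β : Type*} (R : Multiset α) (f : α → β) :
    ∃ (m : ℕ) (b : Fin m → α), m ≤ card R ∧ (∀ i, b i ∈ R) ∧ Function.Injective (f ∘ b) ∧
      ∀ x ∈ R, ∃ i, f (b i) = f x := by
  classical
  set S := R.toFinset.image f
  have hS : ∀ i : Fin S.card, ∃ x ∈ R.toFinset, f x = S.equivFin.symm i :=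
    fun i => Finset.mem_image.1 (S.equivFin.symm i).2
  choose b hbR hb using hS
  refine ⟨S.card, b, Finset.card_image_le.trans (toFinset_card_le R),
    fun i => mem_toFinset.1 (hbR i), fun i j hij => ?_, fun x hx => ?_⟩
  · exact S.equivFin.symm.injective (Subtype.ext ((hb i).symm.trans (hij.trans (hb j))))
  · refine ⟨S.equivFin ⟨f x, Finset.mem_image_of_mem f (mem_toFinset.2 hx)⟩, ?_⟩
    rw [hb, Equiv.symm_apply_apply]

theorem Multiset.exists_fin_disjoint_subfamily {α : Type*} (R : Multiset α) (B : α → Set α)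
    (hmem : ∀ x ∈ R, x ∈ B x) (hB : ∀ x ∈ R, ∀ y ∈ R, B x = B y ∨ Disjoint (B x) (B y)) :
    ∃ (m : ℕ) (b : Fin m → α), m ≤ card R ∧ (∀ i, b i ∈ R) ∧
      (∀ i j, i ≠ j → Disjoint (B (b i)) (B (b j))) ∧ (⋃ x ∈ R, B x) = (⋃ i, B (b i)) ∧
      ∀ x ∈ R, ∃! i, x ∈ B (b i) := by
  obtain ⟨m, b, hm, hbR, hinj, hcover⟩ := R.exists_fin_transversal B
  have hdisj : ∀ i j, i ≠ j → Disjoint (B (b i)) (B (b j)) := fun i j hij =>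
    (hB _ (hbR i) _ (hbR j)).resolve_left (hinj.ne hij)
  refine ⟨m, b, hm, hbR, hdisj, ?_, fun x hx => ?_⟩
  · refine subset_antisymm (Set.iUnion₂_subset fun x hx => ?_)
      (Set.iUnion_subset fun i => Set.subset_biUnion_of_mem (hbR i))
    obtain ⟨i, hi⟩ := hcover x hx
    rw [← hi]
    exact Set.subset_iUnion (fun j => B (b j)) i
  · obtain ⟨i, hi⟩ := hcover x hx
    have hxi : x ∈ B (b i) := hi ▸ hmem x hx
    exact ⟨i, hxi, fun j hj => by_contra fun hji => Set.disjoint_left.1 (hdisj j i hji) hj hxi⟩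

theorem Multiset.sum_card_filter_eq_card {α ι : Type*} [Fintype ι] (R : Multiset α)
    (p : ι → α → Prop) [∀ i, DecidablePred (p i)] (h : ∀ x ∈ R, ∃! i, p i x) :
    ∑ i, (R.filter (p i)).card = card R := by
  induction R using Multiset.induction_on with
  | empty => simp
  | cons x R ih =>
    obtain ⟨i₀, hi₀, huniq⟩ := h x (mem_cons_self x R)
    have hx : ∑ i, (if p i x then 1 else 0) = 1 := by
      rw [Finset.sum_eq_single i₀ (fun i _ hi => if_neg fun hp => hi (huniq i hp)) (by simp),
        if_pos hi₀]
    simp only [← countP_eq_card_filter] at ih ⊢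
    rw [card_cons, ← ih fun y hy => h y (mem_cons_of_mem hy), ← hx, ← Finset.sum_add_distrib]
    simp only [countP_cons]

namespace Polynomial

variable {K : Type*} [NormedField K]

theorem norm_eval_eq_mul_prod_roots [IsAlgClosed K] (f : K[X]) (z : K) :
    ‖f.eval z‖ = ‖f.leadingCoeff‖ * (f.roots.map fun γ => ‖z - γ‖).prod := by
  conv_lhs =>
    rw [← C_leadingCoeff_mul_prod_multiset_X_sub_C (p := f) IsAlgClosed.card_roots_eq_natDegree]
  rw [eval_mul, eval_C, norm_mul, eval_multiset_prod]
  congr 1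
  rw [← normHom_apply, map_multiset_prod]
  simp [Multiset.map_map]

variable [IsUltrametricDist K] {ρ : ℝ}

open Classical in
theorem isDominantIndex_multiset_prod_X_sub_C (R : Multiset K) (α : K) (hρ : 0 < ρ) :
    IsDominantIndex (R.map fun γ => X - C (γ - α)).prod ρ (gaussProd R α ρ)
      (R.filter (· ∈ closedBall α ρ)).card := by
  induction R using Multiset.induction_on with
  | empty => simpa [gaussProd] using isDominantIndex_one
  | cons γ R ih =>
    have := (isDominantIndex_X_sub_C (γ - α) hρ).mul ih hρ
      (hρ.trans_le (le_max_left _ _)) (gaussProd_pos R hρ)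
    simpa [gaussProd, ← Multiset.countP_eq_card_filter, Multiset.countP_cons, add_comm,
      mem_closedBall, dist_eq_norm] using this

variable [IsAlgClosed K]

open Classical in
theorem isDominantIndex_comp_X_add_C {f : K[X]} (hf : f ≠ 0) (α : K) (hρ : 0 < ρ) :
    IsDominantIndex (f.comp (X + C α)) ρ (‖f.leadingCoeff‖ * gaussProd f.roots α ρ)
      (f.roots.filter (· ∈ closedBall α ρ)).card := by
  have hcomp :
      f.comp (X + C α) = C f.leadingCoeff * (f.roots.map fun γ => X - C (γ - α)).prod := by
    conv_lhs =>
      rw [← C_leadingCoeff_mul_prod_multiset_X_sub_C (p := f) IsAlgClosed.card_roots_eq_natDegree]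
    simp only [mul_comp, C_comp, multiset_prod_comp, Multiset.map_map, Function.comp_def,
      sub_comp, X_comp, map_sub]
    congr 3
    funext γ
    ring
  rw [hcomp]
  exact (isDominantIndex_multiset_prod_X_sub_C f.roots α hρ).C_mul (leadingCoeff_ne_zero.2 hf)

open Classical in
theorem card_roots_add_C_filter_closedBall {f : K[X]} {α u : K} (hρ : 0 < ρ) (hα : α ∈ f.roots)
    (hu : ‖u‖ ≤ ‖f.leadingCoeff‖ * gaussProd f.roots α ρ) :
    ((f + C u).roots.filter (· ∈ closedBall α ρ)).card =
      (f.roots.filter (· ∈ closedBall α ρ)).card := by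
  have hf := ne_zero_of_mem_roots hα
  have hG : 0 < ‖f.leadingCoeff‖ * gaussProd f.roots α ρ :=
    mul_pos (norm_pos_iff.2 (leadingCoeff_ne_zero.2 hf)) (gaussProd_pos _ hρ)
  have hn : (f.roots.filter (· ∈ closedBall α ρ)).card ≠ 0 :=
    (Multiset.card_pos_iff_exists_mem.2
      ⟨α, Multiset.mem_filter.2 ⟨hα, mem_closedBall_self hρ.le⟩⟩).ne'
  have hdom := (isDominantIndex_comp_X_add_C hf α hρ).add_C hn hu
  rw [← C_comp (a := u) (p := X + C α), ← add_comp] at hdom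
  have hfu : f + C u ≠ 0 := fun h => hdom.ne_zero hG (by rw [h, zero_comp])
  exact (isDominantIndex_comp_X_add_C hfu α hρ).unique hdom

theorem preimage_eval_closedBall_eq_biUnion {φ : K[X]} {a : K} {r : ℝ} {ρ : K → ℝ}
    (hρ : ∀ α ∈ (φ - C a).roots,
      0 < ρ α ∧ gaussProd (φ - C a).roots α (ρ α) = r / ‖(φ - C a).leadingCoeff‖)
    (hR : (φ - C a).roots ≠ 0) :
    (fun z => φ.eval z) ⁻¹' closedBall a r = ⋃ α ∈ (φ - C a).roots, closedBall α (ρ α) := by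
  have hc : 0 < ‖(φ - C a).leadingCoeff‖ := by
    refine norm_pos_iff.2 (leadingCoeff_ne_zero.2 fun h => hR ?_)
    rw [h, roots_zero]
  ext z
  rw [Set.mem_preimage, mem_closedBall, dist_eq_norm,
    show φ.eval z - a = (φ - C a).eval z by simp, norm_eval_eq_mul_prod_roots, ← le_div_iff₀' hc,
    prod_norm_sub_le_iff_exists_mem_closedBall hρ hR, Set.mem_iUnion₂]
  simp only [exists_prop]

end Polynomial

open Classical in
theorem stmt4_general (Cv : Type*) [NormedField Cv] [IsAlgClosed Cv]
    [IsUltrametricDist Cv]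
    (φ : Polynomial Cv) (d : ℕ) (hd : 1 ≤ d) (hdeg : φ.natDegree = d)
    (a : Cv) (r : ℝ) (hr : 0 < r) :
    ∃ (m : ℕ) (b : Fin m → Cv) (ρ : Fin m → ℝ) (e : Fin m → ℕ),
      1 ≤ m ∧ m ≤ d ∧ (∀ i, 0 < ρ i) ∧
      (∀ i j : Fin m, i ≠ j → Disjoint (closedBall (b i) (ρ i)) (closedBall (b j) (ρ j))) ∧
      ((fun z => φ.eval z) ⁻¹' closedBall a r = ⋃ i, closedBall (b i) (ρ i)) ∧
      (∀ i, 1 ≤ e i ∧ e i ≤ d) ∧ (∑ i, e i = d) ∧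
      ∀ w ∈ closedBall a r, ∀ i,
        Multiset.card ((φ - C w).roots.filter (fun z => z ∈ closedBall (b i) (ρ i))) = e i := by
  set f := φ - C a
  have hR : Multiset.card f.roots = d := by
    rw [IsAlgClosed.card_roots_eq_natDegree, natDegree_sub_C, hdeg]
  have hR0 : f.roots ≠ 0 := Multiset.card_pos.1 (hR ▸ hd)
  obtain ⟨α, hα⟩ := Multiset.exists_mem_of_ne_zero hR0
  have hc : 0 < ‖f.leadingCoeff‖ :=
    norm_pos_iff.2 (leadingCoeff_ne_zero.2 (ne_zero_of_mem_roots hα))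
  choose! ρ hρ using fun β (hβ : β ∈ f.roots) => exists_gaussProd_eq hβ (div_pos hr hc)
  obtain ⟨m, b, hm, hbR, hdisj, hunion, hunique⟩ := f.roots.exists_fin_disjoint_subfamily
    (fun β => closedBall β (ρ β)) (fun β hβ => mem_closedBall_self (hρ β hβ).1.le)
    fun β hβ γ hγ => closedBall_eq_or_disjoint hρ hβ hγ
  refine ⟨m, b, fun i => ρ (b i), fun i => (f.roots.filter (· ∈ closedBall (b i) (ρ (b i)))).card,
    (hunique α hα).exists.elim fun i _ => i.pos, hR ▸ hm, fun i => (hρ _ (hbR i)).1, hdisj,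
    (preimage_eval_closedBall_eq_biUnion hρ hR0).trans hunion,
    fun i => ⟨?_, hR ▸ Multiset.card_le_card (Multiset.filter_le _ _)⟩,
    hR ▸ f.roots.sum_card_filter_eq_card _ hunique, fun w hw i => ?_⟩
  · exact Multiset.card_pos_iff_exists_mem.2
      ⟨b i, Multiset.mem_filter.2 ⟨hbR i, mem_closedBall_self (hρ _ (hbR i)).1.le⟩⟩
  · have hu : ‖a - w‖ ≤ ‖f.leadingCoeff‖ * gaussProd f.roots (b i) (ρ (b i)) := by
      rw [(hρ _ (hbR i)).2, mul_div_cancel₀ _ hc.ne', ← dist_eq_norm, ← mem_closedBall']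
      exact hw
    simpa [f, sub_add_sub_cancel] using
      card_roots_add_C_filter_closedBall (hρ _ (hbR i)).1 (hbR i) hu

open Classical in
/-- Over a complete algebraically closed non-archimedean field, the preimage of a closed disk
under a polynomial `φ` of degree `d ≥ 1` is a disjoint union of `1 ≤ m ≤ d` closed disks,
and on the `i`-th disk `φ` takes every value of the target disk exactly `dᵢ` times
(with multiplicity), with `d₁ + ⋯ + d_m = d`. -/
theorem stmt4 (Cv : Type*) [NormedField Cv] [CompleteSpace Cv] [IsAlgClosed Cv]
    [IsUltrametricDist Cv] (hnt : ∃ x : Cv, 1 < ‖x‖)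
    (φ : Polynomial Cv) (d : ℕ) (hd : 1 ≤ d) (hdeg : φ.natDegree = d)
    (a : Cv) (r : ℝ) (hr : 0 < r) :
    ∃ (m : ℕ) (b : Fin m → Cv) (ρ : Fin m → ℝ) (e : Fin m → ℕ),
      1 ≤ m ∧ m ≤ d ∧ (∀ i, 0 < ρ i) ∧
      (∀ i j : Fin m, i ≠ j → Disjoint (closedBall (b i) (ρ i)) (closedBall (b j) (ρ j))) ∧
      ((fun z => φ.eval z) ⁻¹' closedBall a r = ⋃ i, closedBall (b i) (ρ i)) ∧
      (∀ i, 1 ≤ e i ∧ e i ≤ d) ∧ (∑ i, e i = d) ∧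
      ∀ w ∈ closedBall a r, ∀ i,
        Multiset.card ((φ - C w).roots.filter (fun z => z ∈ closedBall (b i) (ρ i))) = e i :=
  stmt4_general Cv φ d hd hdeg a r hr
end

section
/- Let $f(z) \in \mathbb{C}_v[z]$ be monic of degree $d \geq 3$ over a complete algebraically closed non-archimedean field with residue characteristic $0$ or greater than $d$, with $0$ a fixed point of $f$ of local multiplicity at least $2$ (i.e., $f(z) = z^e \cdot g(z)$ with $e \geq 2$, $g(0) \neq 0$). Suppose $f$ has bad reduction with splitting radius $g_v > 0$, and for $i \geq 1$ let $r_i$ denote the logarithmic radius of the disk component of $f^{-i}(\{z : \log|z|_v \leq g_v\})$ containing $0$. Then the sequence of annulus moduli $r_i - r_{i+1}$ satisfies $g_v/(d-1)^i \leq r_i - r_{i+1} \leq (d-1)g_v/2^{i+1}$ for all $i \geq 1$. -/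
/-!
For monic `f` over an algebraically closed non-archimedean field put
`φ t = ∑_{f a = 0} log (max (exp t) ‖a‖)`. Then `f` maps the disk of log-radius `t` into the disk
of log-radius `φ t`, and, when `f 0 = 0`, onto its interior (density of the value group lets one
test at points whose norm is not that of a root), so the radii satisfy `φ (r (i + 1)) = r i`.
The function `φ` has slope at least the multiplicity `e ≥ 2` of the root `0`, and at most
`d - 1` below `g_v`: some root has norm `≥ exp g_v` (otherwise the filled Julia set would lie in
a smaller disk), while all roots, lying in the filled Julia set, have norm `≤ exp g_v`. Hence
`φ (g_v) = d g_v`, and with `r (-1) := d g_v` the moduli `r i - r (i + 1)` shrink at each step by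
a factor between `1 / (d - 1)` and `1 / 2`, starting from `(d - 1) g_v`.
-/

open Polynomial Filter

namespace IsUltrametricDist

variable {S : Type*} [SeminormedAddCommGroup S] [IsUltrametricDist S]

lemma norm_sub_le_max (x y : S) : ‖x - y‖ ≤ max ‖x‖ ‖y‖ := by
  simpa [sub_eq_add_neg] using norm_add_le_max x (-y)

lemma norm_sub_eq_max_of_norm_ne_norm {x y : S} (h : ‖x‖ ≠ ‖y‖) :
    ‖x - y‖ = max ‖x‖ ‖y‖ := by
  simpa [sub_eq_add_neg] using norm_add_eq_max_of_norm_ne_norm (x := x) (y := -y) (by simpa)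

end IsUltrametricDist

section ValueGroup

variable {K : Type*} [NormedField K] [IsAlgClosed K]

lemma exists_norm_eq_rpow (x : K) (q : ℚ) : ∃ z : K, ‖z‖ = ‖x‖ ^ (q : ℝ) := by
  obtain ⟨z, hz⟩ := IsAlgClosed.exists_pow_nat_eq (x ^ q.num) q.pos
  refine ⟨z, (pow_left_inj₀ (norm_nonneg z) (by positivity) q.pos.ne').mp ?_⟩
  rw [← norm_pow, hz, norm_zpow, ← Real.rpow_natCast, ← Real.rpow_mul (norm_nonneg x),
    ← Real.rpow_intCast]
  congr 1
  rw [Rat.cast_def]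
  field_simp

lemma infinite_range_norm_inter_Ioo {x : K} (hx : 1 < ‖x‖) {a b : ℝ} (ha : 0 < a)
    (hab : a < b) : (Set.range (‖·‖ : K → ℝ) ∩ Set.Ioo a b).Infinite := by
  obtain ⟨q₁, hq₁, hq₁b⟩ := exists_rat_btwn (Real.logb_lt_logb hx ha hab)
  obtain ⟨q₂, hq₁₂, hq₂⟩ := exists_rat_btwn hq₁b
  have hmono : StrictMono fun q : ℚ => ‖x‖ ^ (q : ℝ) :=
    (Real.strictMono_rpow_of_base_gt_one hx).comp Rat.cast_strictMono
  refine ((Set.Ioo_infinite (by exact_mod_cast hq₁₂)).image hmono.injective.injOn).mono ?_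
  rintro _ ⟨q, hq, rfl⟩
  have hx0 : 0 < ‖x‖ := one_pos.trans hx
  refine ⟨exists_norm_eq_rpow x q, ?_, ?_⟩
  · rw [← Real.rpow_logb hx0 hx.ne' ha]
    exact Real.strictMono_rpow_of_base_gt_one hx (hq₁.trans (Rat.cast_lt.2 hq.1))
  · rw [← Real.rpow_logb hx0 hx.ne' (ha.trans hab)]
    exact Real.strictMono_rpow_of_base_gt_one hx ((Rat.cast_lt.2 hq.2).trans hq₂)

lemma exists_norm_mem_Ioo_notMem (hnt : ∃ x : K, 1 < ‖x‖) (E : Finset ℝ) {a b : ℝ}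
    (ha : 0 < a) (hab : a < b) : ∃ z : K, ‖z‖ ∈ Set.Ioo a b ∧ ‖z‖ ∉ E := by
  obtain ⟨x, hx⟩ := hnt
  obtain ⟨_, ⟨⟨z, rfl⟩, hz⟩, hzE⟩ :=
    (infinite_range_norm_inter_Ioo hx ha hab).exists_notMem_finset E
  exact ⟨z, hz, hzE⟩

lemma isGreatest_setOf_norm_le_exp (hnt : ∃ x : K, 1 < ‖x‖) (t : ℝ) :
    IsGreatest {s : ℝ | ∀ z : K, ‖z‖ ≤ Real.exp s → ‖z‖ ≤ Real.exp t} t := by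
  refine ⟨fun z hz => hz, fun s hs => ?_⟩
  by_contra! hts
  obtain ⟨z, hz, -⟩ :=
    exists_norm_mem_Ioo_notMem hnt ∅ (Real.exp_pos t) (Real.exp_lt_exp.2 hts)
  exact (hs z hz.2.le).not_gt hz.1

end ValueGroup

lemma log_max_exp_le_log_max_exp (c : ℝ) {s t : ℝ} (hst : s ≤ t) :
    Real.log (max (Real.exp s) c) ≤ Real.log (max (Real.exp t) c) :=
  Real.log_le_log (lt_max_of_lt_left (Real.exp_pos s)) (max_le_max (Real.exp_le_exp.2 hst) le_rfl)

lemma log_max_exp_sub_log_max_exp_le (c : ℝ) {s t : ℝ} (hst : s ≤ t) :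
    Real.log (max (Real.exp t) c) - Real.log (max (Real.exp s) c) ≤ t - s := by
  have hpos : 0 < max (Real.exp s) c := lt_max_of_lt_left (Real.exp_pos s)
  have hle : max (Real.exp t) c ≤ Real.exp (t - s) * max (Real.exp s) c := by
    refine max_le ?_ ((le_max_right _ _).trans (le_mul_of_one_le_left hpos.le ?_))
    · calc Real.exp t = Real.exp (t - s) * Real.exp s := by rw [← Real.exp_add, sub_add_cancel]
        _ ≤ Real.exp (t - s) * max (Real.exp s) c :=
          mul_le_mul_of_nonneg_left (le_max_left _ _) (Real.exp_pos _).le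
    · exact Real.one_le_exp (sub_nonneg.2 hst)
  have := Real.log_le_log (lt_max_of_lt_left (Real.exp_pos t)) hle
  rw [Real.log_mul (Real.exp_pos _).ne' hpos.ne', Real.log_exp] at this
  linarith

namespace Polynomial

variable {K : Type*} [NormedField K]

/-- A monic `f` maps the disk `‖z‖ ≤ exp t` into the disk of radius `exp (f.logImageRadius t)`,
and onto its interior when `f 0 = 0`. -/
noncomputable def logImageRadius (f : K[X]) (t : ℝ) : ℝ :=
  (f.roots.map fun a => Real.log (max (Real.exp t) ‖a‖)).sum

lemma exp_logImageRadius (f : K[X]) (t : ℝ) :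
    Real.exp (f.logImageRadius t) = (f.roots.map fun a => max (Real.exp t) ‖a‖).prod := by
  rw [logImageRadius, Real.exp_multiset_sum, Multiset.map_map]
  exact congrArg _ (Multiset.map_congr rfl fun a _ =>
    Real.exp_log (lt_max_of_lt_left (Real.exp_pos t)))

lemma continuous_logImageRadius (f : K[X]) : Continuous f.logImageRadius :=
  continuous_multiset_sum _ fun _ _ => (Real.continuous_exp.max continuous_const).log
    fun t => (lt_max_of_lt_left (Real.exp_pos t)).ne'

lemma logImageRadius_of_forall_norm_le (f : K[X]) {t : ℝ}
    (h : ∀ a ∈ f.roots, ‖a‖ ≤ Real.exp t) :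
    f.logImageRadius t = Multiset.card f.roots * t := by
  rw [logImageRadius, Multiset.map_congr rfl fun a ha => by rw [max_eq_left (h a ha),
    Real.log_exp], Multiset.map_const', Multiset.sum_replicate, nsmul_eq_mul]

lemma count_zero_mul_le_logImageRadius_sub [DecidableEq K] (f : K[X]) {s t : ℝ} (hst : s ≤ t) :
    (f.roots.count 0 : ℝ) * (t - s) ≤ f.logImageRadius t - f.logImageRadius s := by
  have hsplit : f.roots = Multiset.replicate (f.roots.count 0) 0 +
      (f.roots - Multiset.replicate (f.roots.count 0) 0) :=
    (add_tsub_cancel_of_le (Multiset.le_count_iff_replicate_le.1 le_rfl)).symm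
  generalize f.roots.count 0 = n at hsplit ⊢
  rw [logImageRadius, logImageRadius, ← Multiset.sum_map_sub, hsplit, Multiset.map_add,
    Multiset.sum_add, Multiset.map_replicate, Multiset.sum_replicate, nsmul_eq_mul]
  simp only [norm_zero, max_eq_left (Real.exp_pos _).le, Real.log_exp]
  refine le_add_of_nonneg_right (Multiset.sum_nonneg fun (x : ℝ) hx => ?_)
  obtain ⟨a, -, rfl⟩ := Multiset.mem_map.1 hx
  exact sub_nonneg.2 (log_max_exp_le_log_max_exp _ hst)

lemma logImageRadius_sub_le_of_mem_roots (f : K[X]) {α : K} (hα : α ∈ f.roots) {s t : ℝ}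
    (hst : s ≤ t) (ht : Real.exp t ≤ ‖α‖) :
    f.logImageRadius t - f.logImageRadius s ≤ ((Multiset.card f.roots - 1 : ℕ) : ℝ) * (t - s) := by
  classical
  rw [logImageRadius, logImageRadius, ← Multiset.sum_map_sub, ← Multiset.cons_erase hα,
    Multiset.map_cons, Multiset.sum_cons, max_eq_right ht,
    max_eq_right ((Real.exp_le_exp.2 hst).trans ht), sub_self, zero_add,
    Multiset.card_cons, Nat.add_sub_cancel]
  refine (Multiset.sum_le_card_nsmul _ (t - s) fun x hx => ?_).trans_eq
    (by rw [Multiset.card_map, nsmul_eq_mul])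
  obtain ⟨a, -, rfl⟩ := Multiset.mem_map.1 hx
  exact log_max_exp_sub_log_max_exp_le _ hst

end Polynomial

namespace Polynomial.Monic

open IsUltrametricDist

variable {K : Type*} [NormedField K] [IsAlgClosed K] {f : K[X]}

lemma norm_eval_eq_prod_roots (hf : f.Monic) (z : K) :
    ‖f.eval z‖ = (f.roots.map fun a => ‖z - a‖).prod := by
  rw [(IsAlgClosed.splits f).eval_eq_prod_roots_of_monic hf]
  exact (map_multiset_prod (normHom : K →*₀ ℝ) _).trans (by simp)

variable [IsUltrametricDist K]

lemma norm_eval_le_exp_logImageRadius (hf : f.Monic) {z : K} {t : ℝ} (hz : ‖z‖ ≤ Real.exp t) :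
    ‖f.eval z‖ ≤ Real.exp (f.logImageRadius t) := by
  rw [hf.norm_eval_eq_prod_roots, exp_logImageRadius]
  exact Multiset.prod_map_le_prod_map₀ _ _ (fun _ _ => norm_nonneg _) fun a _ =>
    (norm_sub_le_max z a).trans (max_le_max hz le_rfl)

/-- If `f - w` had no root in the disk, `‖(f - w) z‖` would be constant on it, equal to `‖w‖`;
but at a point `z` of the disk whose norm is not that of a root of `f`, `‖f z‖` exceeds `‖w‖`. -/
lemma exists_eval_eq_of_norm_lt (hf : f.Monic) (h0 : f.eval 0 = 0) (hnt : ∃ x : K, 1 < ‖x‖)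
    {t : ℝ} {w : K} (hw : ‖w‖ < Real.exp (f.logImageRadius t)) :
    ∃ z : K, ‖z‖ ≤ Real.exp t ∧ f.eval z = w := by
  have hp : (f - C w).Monic :=
    hf.sub_of_left (degree_C_le.trans_lt (degree_pos_of_root hf.ne_zero h0))
  by_contra! hne
  have hroots : ∀ β ∈ (f - C w).roots, Real.exp t < ‖β‖ := fun β hβ => by
    by_contra! h
    exact hne β h (by simpa [sub_eq_zero] using isRoot_of_mem_roots hβ)
  obtain ⟨s, hst, hs⟩ : ∃ s < t, ‖w‖ < Real.exp (f.logImageRadius s) :=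
    (((Real.continuous_exp.comp f.continuous_logImageRadius).tendsto t).eventually
      (lt_mem_nhds hw)).exists_lt
  obtain ⟨z, hz, hzE⟩ := exists_norm_mem_Ioo_notMem hnt (f.roots.map (‖·‖)).toFinset
    (Real.exp_pos s) (Real.exp_lt_exp.2 hst)
  have hfz : ‖w‖ < ‖f.eval z‖ := by
    refine hs.trans_le ?_
    rw [exp_logImageRadius, hf.norm_eval_eq_prod_roots]
    refine Multiset.prod_map_le_prod_map₀ _ _ (fun _ _ => (Real.exp_pos s).le.trans
      (le_max_left _ _)) fun a ha => ?_
    rw [norm_sub_eq_max_of_norm_ne_norm fun h =>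
      hzE (Multiset.mem_toFinset.2 (Multiset.mem_map.2 ⟨a, ha, h.symm⟩))]
    exact max_le_max hz.1.le le_rfl
  have hpz : ‖(f - C w).eval z‖ = ‖(f - C w).eval 0‖ := by
    rw [hp.norm_eval_eq_prod_roots, hp.norm_eval_eq_prod_roots]
    refine congrArg _ (Multiset.map_congr rfl fun β hβ => ?_)
    have hzβ : ‖z‖ < ‖β‖ := hz.2.trans (hroots β hβ)
    rw [zero_sub, norm_neg, norm_sub_eq_max_of_norm_ne_norm hzβ.ne, max_eq_right hzβ.le]
  rw [eval_sub, eval_sub, eval_C, eval_C, h0, zero_sub, norm_neg,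
    norm_sub_eq_max_of_norm_ne_norm hfz.ne', max_eq_left hfz.le] at hpz
  exact hfz.ne' hpz

lemma logImageRadius_eq_of_isGreatest (hf : f.Monic) (h0 : f.eval 0 = 0)
    (hnt : ∃ x : K, 1 < ‖x‖) (P : K → Prop) {s₀ s₁ : ℝ}
    (h₀ : IsGreatest {s | ∀ z : K, ‖z‖ ≤ Real.exp s → P z} s₀)
    (h₁ : IsGreatest {s | ∀ z : K, ‖z‖ ≤ Real.exp s → P (f.eval z)} s₁) :
    f.logImageRadius s₁ = s₀ := by
  refine le_antisymm (le_of_forall_lt_imp_le_of_dense fun s hs => h₀.2 fun w hw => ?_) ?_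
  · obtain ⟨z, hz, rfl⟩ :=
      hf.exists_eval_eq_of_norm_lt h0 hnt (hw.trans_lt (Real.exp_lt_exp.2 hs))
    exact h₁.1 z hz
  · by_contra! hlt
    obtain ⟨s, hs₁, hs⟩ : ∃ s, s₁ < s ∧ f.logImageRadius s < s₀ :=
      ((f.continuous_logImageRadius.tendsto s₁).eventually (gt_mem_nhds hlt)).exists_gt
    refine hs₁.not_ge (h₁.2 fun z hz => h₀.1 _ ?_)
    exact (hf.norm_eval_le_exp_logImageRadius hz).trans (Real.exp_le_exp.2 hs.le)

lemma norm_eval_eq_pow_natDegree (hf : f.Monic) {z : K} (hz : ∀ a ∈ f.roots, ‖a‖ < ‖z‖) :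
    ‖f.eval z‖ = ‖z‖ ^ f.natDegree := by
  rw [hf.norm_eval_eq_prod_roots, Multiset.map_congr rfl fun a ha => by
    rw [norm_sub_eq_max_of_norm_ne_norm (hz a ha).ne', max_eq_left (hz a ha).le],
    Multiset.map_const', Multiset.prod_replicate, IsAlgClosed.card_roots_eq_natDegree]

lemma norm_iterate_eval (hf : f.Monic) {z : K} (hz₁ : 1 ≤ ‖z‖)
    (hz : ∀ a ∈ f.roots, ‖a‖ < ‖z‖) (n : ℕ) :
    ‖(fun w => f.eval w)^[n] z‖ = ‖z‖ ^ (f.natDegree ^ n) := by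
  induction n with
  | zero => simp
  | succ n ih =>
    rw [Function.iterate_succ_apply', hf.norm_eval_eq_pow_natDegree fun a ha => ?_, ih,
      ← pow_mul, pow_succ]
    have hd : f.natDegree ≠ 0 := by
      rw [← IsAlgClosed.card_roots_eq_natDegree]
      exact (Multiset.card_pos_iff_exists_mem.2 ⟨a, ha⟩).ne'
    rw [ih]
    exact (hz a ha).trans_le (le_self_pow₀ hz₁ (pow_ne_zero _ hd))

lemma norm_le_of_bounded_orbit (hf : f.Monic) (hd : 2 ≤ f.natDegree) {c : ℝ} (hc : 1 ≤ c)
    (hroots : ∀ a ∈ f.roots, ‖a‖ ≤ c) {z : K}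
    (hz : ∃ M : ℝ, ∀ n : ℕ, ‖(fun w => f.eval w)^[n] z‖ ≤ M) : ‖z‖ ≤ c := by
  by_contra! hzc
  obtain ⟨M, hM⟩ := hz
  have hz₁ : 1 < ‖z‖ := hc.trans_lt hzc
  obtain ⟨n, hn⟩ := pow_unbounded_of_one_lt M hz₁
  refine (hM n).not_gt (hn.trans_le ?_)
  rw [hf.norm_iterate_eval hz₁.le fun a ha => (hroots a ha).trans_lt hzc]
  exact pow_le_pow_right₀ hz₁.le (Nat.lt_pow_self hd).le

lemma exists_mem_roots_exp_le_norm (hf : f.Monic) (hd : 2 ≤ f.natDegree) {g : ℝ} (hg : 0 < g)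
    (hK : g ∈ lowerBounds {s : ℝ | ∀ z : K,
      (∃ M : ℝ, ∀ n : ℕ, ‖(fun w => f.eval w)^[n] z‖ ≤ M) → ‖z‖ ≤ Real.exp s}) :
    ∃ α ∈ f.roots, Real.exp g ≤ ‖α‖ := by
  classical
  have hne : f.roots.toFinset.Nonempty := by
    rw [Multiset.toFinset_nonempty, ← Multiset.card_pos, IsAlgClosed.card_roots_eq_natDegree]
    omega
  obtain ⟨α, hα, hmax⟩ := f.roots.toFinset.exists_max_image (‖·‖) hne
  rw [Multiset.mem_toFinset] at hα
  refine ⟨α, hα, ?_⟩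
  have hc : 0 < max 1 ‖α‖ := one_pos.trans_le (le_max_left _ _)
  have hgc : Real.exp g ≤ max 1 ‖α‖ := by
    rw [← Real.exp_log hc]
    refine Real.exp_le_exp.2 (hK fun z hz => ?_)
    rw [Real.exp_log hc]
    exact hf.norm_le_of_bounded_orbit hd (le_max_left _ _)
      (fun a ha => (hmax a (Multiset.mem_toFinset.2 ha)).trans (le_max_right _ _)) hz
  exact (le_max_iff.1 hgc).resolve_left (Real.one_lt_exp_iff.2 hg).not_ge

end Polynomial.Monic

lemma Polynomial.bounded_orbit_of_mem_roots {K : Type*} [NormedField K] {f : K[X]}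
    (h0 : f.eval 0 = 0) {a : K} (ha : a ∈ f.roots) :
    ∃ M : ℝ, ∀ n : ℕ, ‖(fun w => f.eval w)^[n] a‖ ≤ M := by
  refine ⟨‖a‖, fun n => ?_⟩
  cases n with
  | zero => simp
  | succ n =>
    rw [Function.iterate_succ_apply, (isRoot_of_mem_roots ha).eq_zero, Function.iterate_fixed h0]
    simp

section SlopeRecursion

variable {φ : ℝ → ℝ} {x : ℕ → ℝ}

lemma antitone_of_apply_succ_eq (hφ : StrictMono φ) (hx : ∀ i, φ (x (i + 1)) = x i)
    (h0 : x 0 ≤ φ (x 0)) : Antitone x := by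
  refine antitone_nat_of_succ_le fun i => ?_
  induction i with
  | zero => exact hφ.le_iff_le.1 (by rwa [hx 0])
  | succ i ih => exact hφ.le_iff_le.1 (by rwa [hx, hx])

/-- `φ (x 0)` plays the role of `x (-1)`. -/
lemma sub_succ_bounds_of_slope_bounds {a b c : ℝ} (ha : 0 < a) (hb : 0 < b)
    (hslope : ∀ s t, s ≤ t → t ≤ c → a * (t - s) ≤ φ t - φ s ∧ φ t - φ s ≤ b * (t - s))
    (hx : ∀ i, φ (x (i + 1)) = x i) (hanti : Antitone x) (hc : x 0 ≤ c) (i : ℕ) :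
    (φ (x 0) - x 0) / b ^ (i + 1) ≤ x i - x (i + 1) ∧
      x i - x (i + 1) ≤ (φ (x 0) - x 0) / a ^ (i + 1) := by
  have step (i : ℕ) : a * (x i - x (i + 1)) ≤ φ (x i) - x i ∧
      φ (x i) - x i ≤ b * (x i - x (i + 1)) := by
    simpa only [hx] using hslope _ _ (hanti i.le_succ) ((hanti i.zero_le).trans hc)
  induction i with
  | zero =>
    obtain ⟨h₁, h₂⟩ := step 0
    rw [zero_add, pow_one, pow_one, div_le_iff₀ hb, le_div_iff₀ ha]
    constructor <;> linarith
  | succ i ih =>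
    obtain ⟨h₁, h₂⟩ := step (i + 1)
    rw [hx i] at h₁ h₂
    constructor
    · calc (φ (x 0) - x 0) / b ^ (i + 2) = (φ (x 0) - x 0) / b ^ (i + 1) / b := by
            rw [pow_succ, div_div]
        _ ≤ (x i - x (i + 1)) / b := by gcongr; exact ih.1
        _ ≤ x (i + 1) - x (i + 2) := by rw [div_le_iff₀ hb]; linarith
    · calc x (i + 1) - x (i + 2) ≤ (x i - x (i + 1)) / a := by rw [le_div_iff₀ ha]; linarith
        _ ≤ (φ (x 0) - x 0) / a ^ (i + 1) / a := by gcongr; exact ih.2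
        _ = (φ (x 0) - x 0) / a ^ (i + 2) := by rw [div_div, ← pow_succ]

end SlopeRecursion

theorem stmt5_general (Cv : Type*) [NormedField Cv] [IsAlgClosed Cv]
    [IsUltrametricDist Cv] (hnt : ∃ x : Cv, 1 < ‖x‖)
    (f g : Polynomial Cv) (d e : ℕ) (he : 2 ≤ e)
    (hf : f = X ^ e * g) (hmonic : f.Monic) (hdeg : f.natDegree = d)
    (gv : ℝ) (hgv : 0 < gv)
    (hK : IsLeast {s : ℝ | ∀ z : Cv,
      (∃ M : ℝ, ∀ n : ℕ, ‖(fun w => f.eval w)^[n] z‖ ≤ M) → ‖z‖ ≤ Real.exp s} gv)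
    (r : ℕ → ℝ)
    (hr : ∀ i : ℕ, IsGreatest {s : ℝ | ∀ z : Cv, ‖z‖ ≤ Real.exp s →
      ‖(fun w => f.eval w)^[i] z‖ ≤ Real.exp gv} (r i)) :
    ∀ i : ℕ, 1 ≤ i →
      gv / ((d : ℝ) - 1) ^ i ≤ r i - r (i + 1) ∧
      r i - r (i + 1) ≤ ((d : ℝ) - 1) * gv / 2 ^ (i + 1) := by
  classical
  intro i _
  have hf0 : f.eval 0 = 0 := by simp [hf, zero_pow (by omega : e ≠ 0)]
  have hcount : e ≤ f.roots.count 0 := by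
    rw [count_roots, le_rootMultiplicity_iff hmonic.ne_zero, map_zero, sub_zero, hf]
    exact dvd_mul_right _ _
  have hcard : Multiset.card f.roots = d := hdeg ▸ IsAlgClosed.card_roots_eq_natDegree
  have hed : e ≤ d := hcard ▸ hcount.trans (Multiset.count_le_card _ _)
  have hd : (2 : ℝ) ≤ d := by exact_mod_cast he.trans hed
  obtain ⟨α, hα, hαgv⟩ := hmonic.exists_mem_roots_exp_le_norm (by omega) hgv hK.2
  have hroots (a) (ha : a ∈ f.roots) : ‖a‖ ≤ Real.exp gv :=
    hK.1 a (bounded_orbit_of_mem_roots hf0 ha)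
  have hlow (s t : ℝ) (hst : s ≤ t) : 2 * (t - s) ≤ f.logImageRadius t - f.logImageRadius s :=
    (mul_le_mul_of_nonneg_right (by exact_mod_cast he.trans hcount) (sub_nonneg.2 hst)).trans
      (f.count_zero_mul_le_logImageRadius_sub hst)
  have hup (s t : ℝ) (hst : s ≤ t) (ht : t ≤ gv) :
      f.logImageRadius t - f.logImageRadius s ≤ ((d : ℝ) - 1) * (t - s) := by
    have := f.logImageRadius_sub_le_of_mem_roots hα hst ((Real.exp_le_exp.2 ht).trans hαgv)
    rwa [hcard, Nat.cast_sub (by omega), Nat.cast_one] at this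
  have hr0 : r 0 = gv := (hr 0).unique (isGreatest_setOf_norm_le_exp hnt gv)
  have hφr0 : f.logImageRadius (r 0) = d * gv := by
    rw [hr0, f.logImageRadius_of_forall_norm_le hroots, hcard]
  have hrec (i : ℕ) : f.logImageRadius (r (i + 1)) = r i :=
    hmonic.logImageRadius_eq_of_isGreatest hf0 hnt _ (hr i)
      (by simpa only [Function.iterate_succ_apply] using hr (i + 1))
  have hanti : Antitone r := antitone_of_apply_succ_eq
    (fun s t hst => by linarith [hlow s t hst.le]) hrec (by rw [hφr0, hr0]; nlinarith)
  have key := sub_succ_bounds_of_slope_bounds two_pos (by linarith) (fun s t hst ht =>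
    ⟨hlow s t hst, hup s t hst ht⟩) hrec hanti hr0.le i
  rw [hφr0, hr0, ← sub_one_mul] at key
  refine ⟨le_of_eq_of_le ?_ key.1, key.2⟩
  rw [pow_succ, mul_comm _ gv, mul_div_mul_right _ _ (by linarith)]

/-- For a monic polynomial `f = z^e g(z)` of degree `d ≥ 3` with a superattracting fixed point
at `0` (`e ≥ 2`, `g(0) ≠ 0`) over a complete algebraically closed non-archimedean field of
residue characteristic `0` or `> d`, with bad reduction and splitting radius `g_v > 0`
(the logarithmic radius of the smallest disk about `0` containing the filled Julia set),
the logarithmic radii `r i` of the disk components containing `0` of the iterated preimages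
of the disk of logarithmic radius `g_v` satisfy
`g_v/(d-1)^i ≤ r i - r (i+1) ≤ (d-1) g_v / 2^(i+1)` for all `i ≥ 1`. -/
theorem stmt5 (Cv : Type*) [NormedField Cv] [CompleteSpace Cv] [IsAlgClosed Cv]
    [IsUltrametricDist Cv] (hnt : ∃ x : Cv, 1 < ‖x‖)
    (f g : Polynomial Cv) (d e : ℕ) (hd : 3 ≤ d) (he : 2 ≤ e)
    (hf : f = X ^ e * g) (hg0 : g.eval 0 ≠ 0) (hmonic : f.Monic) (hdeg : f.natDegree = d)
    (hres : ∀ p : ℕ, p.Prime → p ≤ d → ‖(p : Cv)‖ = 1)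
    (gv : ℝ) (hgv : 0 < gv)
    (hK : IsLeast {s : ℝ | ∀ z : Cv,
      (∃ M : ℝ, ∀ n : ℕ, ‖(fun w => f.eval w)^[n] z‖ ≤ M) → ‖z‖ ≤ Real.exp s} gv)
    (r : ℕ → ℝ)
    (hr : ∀ i : ℕ, IsGreatest {s : ℝ | ∀ z : Cv, ‖z‖ ≤ Real.exp s →
      ‖(fun w => f.eval w)^[i] z‖ ≤ Real.exp gv} (r i)) :
    ∀ i : ℕ, 1 ≤ i →
      gv / ((d : ℝ) - 1) ^ i ≤ r i - r (i + 1) ∧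
      r i - r (i + 1) ≤ ((d : ℝ) - 1) * gv / 2 ^ (i + 1) :=
  stmt5_general Cv hnt f g d e he hf hmonic hdeg gv hgv hK r hr
end

section
/- Mason–Stothers theorem ($abc$ for polynomials): Let $k$ be a field of characteristic zero, and let $a, b, c \in k[t]$ be nonzero polynomials, not all constant, with $a + b + c = 0$ and $\gcd(a, b, c) = 1$. Then $\max\{\deg a, \deg b, \deg c\} \leq \deg \mathrm{rad}(abc) - 1$, where $\mathrm{rad}(abc)$ is the product of the distinct irreducible factors of $abc$. -/
open Polynomial UniqueFactorizationMonoid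

theorem isRelPrime_of_add_add_eq_zero {R : Type*} [CommRing R] {a b c : R} (hsum : a + b + c = 0)
    (hgcd : ∀ p : R, p ∣ a → p ∣ b → p ∣ c → IsUnit p) : IsRelPrime a b := by
  intro d hda hdb
  have hc : c = -(a + b) := by linear_combination hsum
  exact hgcd d hda hdb (hc ▸ (dvd_add hda hdb).neg_right)

/-- Mason–Stothers theorem (abc for polynomials): if `a, b, c` are nonzero polynomials over
a field of characteristic zero, not all constant, with `a + b + c = 0` and
`gcd(a,b,c) = 1`, then `max(deg a, deg b, deg c) ≤ deg rad(abc) - 1`. -/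
theorem stmt7 (k : Type*) [Field k] [CharZero k] [DecidableEq k]
    (a b c : Polynomial k) (ha : a ≠ 0) (hb : b ≠ 0) (hc : c ≠ 0)
    (hnc : ¬(a.natDegree = 0 ∧ b.natDegree = 0 ∧ c.natDegree = 0))
    (hsum : a + b + c = 0)
    (hgcd : ∀ p : Polynomial k, p ∣ a → p ∣ b → p ∣ c → IsUnit p) :
    max (max a.natDegree b.natDegree) c.natDegree ≤ (radical (a * b * c)).natDegree - 1 := by
  have hab : IsCoprime a b := (isRelPrime_of_add_add_eq_zero hsum hgcd).isCoprime
  rcases Polynomial.abc ha hb hc hab hsum with ⟨hda, hdb, hdc⟩ | ⟨hda, hdb, hdc⟩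
  · omega
  · simp only [derivative_eq_zero] at hda hdb hdc
    exact absurd ⟨hda, hdb, hdc⟩ hnc
end
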